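/- Let q ∈ [0,1] and R_q > 0, and suppose Θ* ∈ ℝ^{(n+m)×n} satisfies ∑_{j=1}^n σ_j(Θ*)^q ≤ R_q, where σ_j(Θ*) are the singular values of Θ* (with the convention 0^0 = 0). Suppose the loss L_N satisfies the operator-norm curvature condition with curvature K > 0 and tolerance τ_N ≥ 0, i.e., ‖∇L_N(Θ*+Δ) − ∇L_N(Θ*)‖_op ≥ K‖Δ‖_op − τ_N‖Δ‖_nuc for all Δ ∈ ℝ^{(n+m)×n}; that 128·τ_N·R_q ≤ K; and that λ_N ≥ 2‖∇L_N(Θ*)‖_op. Then any global minimizer Θ̂ of L_N(Θ) + λ_N‖Θ‖_nuc satisfies ‖Θ̂ − Θ*‖_op ≤ max{32τ_N R_q/K, 6λ_N/K}. -/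

import Mathlib

open MeasureTheory ProbabilityTheory Matrix Real

/-- Frobenius norm of a real matrix. -/
noncomputable def frobNorm {p q : ℕ} (A : Matrix (Fin p) (Fin q) ℝ) : ℝ :=
  Real.sqrt (∑ i, ∑ j, (A i j) ^ 2)

/-- Singular values of a real matrix: square roots of the eigenvalues of Aᵀ * A. -/
noncomputable def svals {p q : ℕ} (A : Matrix (Fin p) (Fin q) ℝ) (j : Fin q) : ℝ :=
  Real.sqrt ((show (Aᵀ * A).IsHermitian by
    simpa [Matrix.conjTranspose_eq_transpose_of_trivial] using
      Matrix.isHermitian_conjTranspose_mul_self A).eigenvalues j)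

/-- Operator (spectral) norm: the largest singular value. -/
noncomputable def opNorm {p q : ℕ} (A : Matrix (Fin p) (Fin q) ℝ) : ℝ := ⨆ j, svals A j

/-- Nuclear norm: the sum of the singular values. -/
noncomputable def nucNorm {p q : ℕ} (A : Matrix (Fin p) (Fin q) ℝ) : ℝ := ∑ j, svals A j

/-- The least-squares loss L_N(Θ) = (1/(2N)) ‖X − ZΘ‖_F². -/
noncomputable def lossFn {N n d : ℕ} (X : Matrix (Fin N) (Fin n) ℝ)
    (Z : Matrix (Fin N) (Fin d) ℝ) (Θ : Matrix (Fin d) (Fin n) ℝ) : ℝ :=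
  (1 / (2 * (N : ℝ))) * (frobNorm (X - Z * Θ)) ^ 2

/-- The gradient of the least-squares loss: ∇L_N(Θ) = (1/N) Zᵀ(ZΘ − X). -/
noncomputable def gradFn {N n d : ℕ} (X : Matrix (Fin N) (Fin n) ℝ)
    (Z : Matrix (Fin N) (Fin d) ℝ) (Θ : Matrix (Fin d) (Fin n) ℝ) : Matrix (Fin d) (Fin n) ℝ :=
  (1 / (N : ℝ)) • (Zᵀ * (Z * Θ - X))

/-!
Write `Δ = Θ̂ - Θ*` and `t = ‖Δ‖_op`. Optimality of `Θ̂` gives `‖∇L_N(Θ̂)‖_op ≤ λ_N`, so the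
curvature condition yields `K t - τ_N ‖Δ‖_nuc ≤ 3 λ_N / 2`, while comparing `Θ̂` with `Θ*` gives
`‖Θ̂‖_nuc - ‖Θ*‖_nuc ≤ ‖Δ‖_nuc / 2`. Keep the singular directions of `Θ*` with `σⱼ > t` and split
`Δ` into the block `Δ₂` orthogonal to them on both sides and the rest `Δ₁`, of rank at most twice
their number. Decomposability of the nuclear norm then gives the cone bound
`‖Δ‖_nuc ≤ 4 ‖Δ₁‖_nuc + 4 ∑_{σⱼ ≤ t} σⱼ`, and the `ℓ_q`-ball bounds both terms by multiples of
`R_q t^{1-q}`. Hence `K t ≤ 3 λ_N / 2 + 12 τ_N R_q t^{1-q}`, and `128 τ_N R_q ≤ K` leaves the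
two cases of the maximum.
-/

open Finset

section EuclNorm

variable {k : ℕ}

noncomputable def euclNorm (v : Fin k → ℝ) : ℝ := ‖WithLp.toLp 2 v‖

lemma euclNorm_nonneg (v : Fin k → ℝ) : 0 ≤ euclNorm v := norm_nonneg _

lemma euclNorm_sq (v : Fin k → ℝ) : euclNorm v ^ 2 = v ⬝ᵥ v := by
  rw [euclNorm, ← real_inner_self_eq_norm_sq, EuclideanSpace.inner_toLp_toLp, star_trivial]

lemma abs_dotProduct_le (u v : Fin k → ℝ) : |u ⬝ᵥ v| ≤ euclNorm u * euclNorm v := by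
  have h := abs_real_inner_le_norm (WithLp.toLp 2 v) (WithLp.toLp 2 u)
  rwa [EuclideanSpace.inner_toLp_toLp, star_trivial, mul_comm] at h

lemma euclNorm_sub_le (u v : Fin k → ℝ) : euclNorm (u - v) ≤ euclNorm u + euclNorm v :=
  norm_sub_le (WithLp.toLp 2 u) (WithLp.toLp 2 v)

lemma euclNorm_smul (c : ℝ) (v : Fin k → ℝ) : euclNorm (c • v) = |c| * euclNorm v := by
  rw [euclNorm, WithLp.toLp_smul, norm_smul, Real.norm_eq_abs, euclNorm]

lemma euclNorm_le_of_dotProduct_self_le {v : Fin k → ℝ} {c : ℝ} (hc : 0 ≤ c)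
    (h : v ⬝ᵥ v ≤ c ^ 2) : euclNorm v ≤ c := by
  rw [← euclNorm_sq] at h
  exact (pow_le_pow_iff_left₀ (euclNorm_nonneg v) hc two_ne_zero).mp h

lemma euclNorm_eq_of_dotProduct_self_eq {v : Fin k → ℝ} {c : ℝ} (hc : 0 ≤ c)
    (h : v ⬝ᵥ v = c ^ 2) : euclNorm v = c := by
  rw [← euclNorm_sq] at h
  exact (pow_left_inj₀ (euclNorm_nonneg v) hc two_ne_zero).mp h

lemma dotProduct_self_sum_smul {ι : Type*} {s : Finset ι} {a : ι → Fin k → ℝ}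
    (ha : ∀ i ∈ s, ∀ j ∈ s, i ≠ j → a i ⬝ᵥ a j = 0) (c : ι → ℝ) :
    (∑ i ∈ s, c i • a i) ⬝ᵥ (∑ i ∈ s, c i • a i) = ∑ i ∈ s, c i ^ 2 * (a i ⬝ᵥ a i) := by
  classical
  simp only [sum_dotProduct, dotProduct_sum, smul_dotProduct, dotProduct_smul, smul_eq_mul]
  refine sum_congr rfl fun i hi => ?_
  rw [sum_eq_single_of_mem i hi fun j hj hji => by simp [ha j hj i hi hji]]
  ring

end EuclNorm

section FrobInner

variable {p q : ℕ}

def frobInner (A B : Matrix (Fin p) (Fin q) ℝ) : ℝ := (Aᵀ * B).trace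

lemma frobInner_comm (A B : Matrix (Fin p) (Fin q) ℝ) : frobInner A B = frobInner B A := by
  rw [frobInner, ← trace_transpose, transpose_mul, transpose_transpose, frobInner]

lemma frobInner_add_right (A B C : Matrix (Fin p) (Fin q) ℝ) :
    frobInner A (B + C) = frobInner A B + frobInner A C := by
  simp only [frobInner, Matrix.mul_add, trace_add]

lemma frobInner_add_left (A B C : Matrix (Fin p) (Fin q) ℝ) :
    frobInner (A + B) C = frobInner A C + frobInner B C := by
  simp only [frobInner, transpose_add, Matrix.add_mul, trace_add]

lemma frobInner_sub_right (A B C : Matrix (Fin p) (Fin q) ℝ) :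
    frobInner A (B - C) = frobInner A B - frobInner A C := by
  simp only [frobInner, Matrix.mul_sub, trace_sub]

lemma frobInner_sub_left (A B C : Matrix (Fin p) (Fin q) ℝ) :
    frobInner (A - B) C = frobInner A C - frobInner B C := by
  simp only [frobInner, transpose_sub, Matrix.sub_mul, trace_sub]

lemma frobInner_neg_left (A B : Matrix (Fin p) (Fin q) ℝ) :
    frobInner (-A) B = -frobInner A B := by
  simp only [frobInner, transpose_neg, Matrix.neg_mul, trace_neg]

lemma frobInner_smul_left (c : ℝ) (A B : Matrix (Fin p) (Fin q) ℝ) :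
    frobInner (c • A) B = c * frobInner A B := by
  simp only [frobInner, transpose_smul, Matrix.smul_mul, trace_smul, smul_eq_mul]

lemma frobInner_smul_right (c : ℝ) (A B : Matrix (Fin p) (Fin q) ℝ) :
    frobInner A (c • B) = c * frobInner A B := by
  simp only [frobInner, Matrix.mul_smul, trace_smul, smul_eq_mul]

lemma frobInner_sum_right {ι : Type*} (s : Finset ι) (A : Matrix (Fin p) (Fin q) ℝ)
    (B : ι → Matrix (Fin p) (Fin q) ℝ) :
    frobInner A (∑ i ∈ s, B i) = ∑ i ∈ s, frobInner A (B i) := by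
  simp only [frobInner, Matrix.mul_sum, trace_sum]

lemma frobInner_vecMulVec_right (A : Matrix (Fin p) (Fin q) ℝ) (x : Fin p → ℝ) (y : Fin q → ℝ) :
    frobInner A (vecMulVec x y) = x ⬝ᵥ (A *ᵥ y) := by
  rw [frobInner, mul_vecMulVec, trace_vecMulVec, mulVec_transpose, dotProduct_mulVec]

lemma frobInner_transpose_mul_left {N : ℕ} (Z : Matrix (Fin N) (Fin p) ℝ)
    (M : Matrix (Fin N) (Fin q) ℝ) (Δ : Matrix (Fin p) (Fin q) ℝ) :
    frobInner (Zᵀ * M) Δ = frobInner M (Z * Δ) := by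
  rw [frobInner, frobInner, transpose_mul, transpose_transpose, Matrix.mul_assoc]

lemma frobNorm_sq (A : Matrix (Fin p) (Fin q) ℝ) : frobNorm A ^ 2 = frobInner A A := by
  have h : frobInner A A = ∑ i, ∑ j, A i j ^ 2 := by
    simp only [frobInner, trace, diag_apply, mul_apply, transpose_apply, ← sq]
    exact sum_comm
  rw [frobNorm, h, Real.sq_sqrt (by positivity)]

lemma frobInner_self_nonneg (A : Matrix (Fin p) (Fin q) ℝ) : 0 ≤ frobInner A A :=
  frobNorm_sq A ▸ sq_nonneg _

end FrobInner

section SingularVectors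

variable {p q : ℕ}

lemma isHermitian_transpose_mul_self (A : Matrix (Fin p) (Fin q) ℝ) : (Aᵀ * A).IsHermitian := by
  simpa [conjTranspose_eq_transpose_of_trivial] using isHermitian_conjTranspose_mul_self A

/-- Right singular vectors, indexed consistently with `svals A`. -/
noncomputable def rsv (A : Matrix (Fin p) (Fin q) ℝ) (j : Fin q) : Fin q → ℝ :=
  WithLp.ofLp ((isHermitian_transpose_mul_self A).eigenvectorBasis j)

/-- `lsv A j = A vⱼ = σⱼ uⱼ`: the left singular vectors, scaled by the singular values. -/
noncomputable def lsv (A : Matrix (Fin p) (Fin q) ℝ) (j : Fin q) : Fin p → ℝ :=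
  A *ᵥ rsv A j

lemma svals_nonneg (A : Matrix (Fin p) (Fin q) ℝ) (j : Fin q) : 0 ≤ svals A j :=
  Real.sqrt_nonneg _

lemma svals_sq (A : Matrix (Fin p) (Fin q) ℝ) (j : Fin q) :
    svals A j ^ 2 = (isHermitian_transpose_mul_self A).eigenvalues j :=
  Real.sq_sqrt (eigenvalues_conjTranspose_mul_self_nonneg A j)

lemma transpose_mul_self_mulVec_rsv (A : Matrix (Fin p) (Fin q) ℝ) (j : Fin q) :
    (Aᵀ * A) *ᵥ rsv A j = svals A j ^ 2 • rsv A j := by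
  rw [svals_sq]
  exact (isHermitian_transpose_mul_self A).mulVec_eigenvectorBasis j

lemma rsv_dotProduct (A : Matrix (Fin p) (Fin q) ℝ) (i j : Fin q) :
    rsv A i ⬝ᵥ rsv A j = if i = j then 1 else 0 := by
  have h := orthonormal_iff_ite.mp (isHermitian_transpose_mul_self A).eigenvectorBasis.orthonormal
    j i
  rw [EuclideanSpace.inner_eq_star_dotProduct, star_trivial] at h
  exact h.trans (if_congr eq_comm rfl rfl)

lemma euclNorm_rsv (A : Matrix (Fin p) (Fin q) ℝ) (j : Fin q) : euclNorm (rsv A j) = 1 :=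
  euclNorm_eq_of_dotProduct_self_eq zero_le_one (by rw [rsv_dotProduct, if_pos rfl, one_pow])

lemma sum_rsv_dotProduct_smul (A : Matrix (Fin p) (Fin q) ℝ) (x : Fin q → ℝ) :
    ∑ j, (rsv A j ⬝ᵥ x) • rsv A j = x := by
  have h := congrArg WithLp.ofLp
    ((isHermitian_transpose_mul_self A).eigenvectorBasis.sum_repr' (WithLp.toLp 2 x))
  simpa [EuclideanSpace.inner_eq_star_dotProduct, rsv, dotProduct_comm] using h

lemma sum_sq_rsv_dotProduct (A : Matrix (Fin p) (Fin q) ℝ) (x : Fin q → ℝ) :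
    ∑ j, (rsv A j ⬝ᵥ x) ^ 2 = x ⬝ᵥ x := by
  have h := (isHermitian_transpose_mul_self A).eigenvectorBasis.sum_inner_mul_inner
    (WithLp.toLp 2 x) (WithLp.toLp 2 x)
  simpa [EuclideanSpace.inner_eq_star_dotProduct, rsv, dotProduct_comm, ← sq, ← euclNorm_sq,
    euclNorm] using h

lemma lsv_dotProduct (A : Matrix (Fin p) (Fin q) ℝ) (i j : Fin q) :
    lsv A i ⬝ᵥ lsv A j = if i = j then svals A i ^ 2 else 0 := by
  rw [lsv, lsv, dotProduct_mulVec, ← mulVec_transpose, mulVec_mulVec,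
    transpose_mul_self_mulVec_rsv, smul_dotProduct, rsv_dotProduct, smul_eq_mul]
  split_ifs with h <;> simp [h]

lemma euclNorm_lsv (A : Matrix (Fin p) (Fin q) ℝ) (j : Fin q) : euclNorm (lsv A j) = svals A j :=
  euclNorm_eq_of_dotProduct_self_eq (svals_nonneg A j) (by rw [lsv_dotProduct, if_pos rfl])

lemma dotProduct_self_sum_smul_lsv (A : Matrix (Fin p) (Fin q) ℝ) (c : Fin q → ℝ) :
    (∑ j, c j • lsv A j) ⬝ᵥ (∑ j, c j • lsv A j) = ∑ j, c j ^ 2 * svals A j ^ 2 := by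
  rw [dotProduct_self_sum_smul fun i _ j _ hij => by rw [lsv_dotProduct, if_neg hij]]
  simp only [lsv_dotProduct, if_true]

lemma mulVec_eq_sum_lsv (A : Matrix (Fin p) (Fin q) ℝ) (x : Fin q → ℝ) :
    A *ᵥ x = ∑ j, (rsv A j ⬝ᵥ x) • lsv A j := by
  conv_lhs => rw [← sum_rsv_dotProduct_smul A x]
  simp only [mulVec_sum, mulVec_smul, lsv]

lemma eq_sum_vecMulVec_lsv_rsv (A : Matrix (Fin p) (Fin q) ℝ) :
    A = ∑ j, vecMulVec (lsv A j) (rsv A j) := by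
  refine ext_iff_mulVec.mpr fun x => ?_
  rw [mulVec_eq_sum_lsv, sum_mulVec]
  refine sum_congr rfl fun j _ => ?_
  rw [vecMulVec_mulVec, op_smul_eq_smul]

end SingularVectors

section Norms

variable {p q : ℕ}

lemma svals_le_opNorm (A : Matrix (Fin p) (Fin q) ℝ) (j : Fin q) : svals A j ≤ opNorm A :=
  le_ciSup (Set.finite_range _).bddAbove j

lemma opNorm_nonneg (A : Matrix (Fin p) (Fin q) ℝ) : 0 ≤ opNorm A :=
  Real.iSup_nonneg (svals_nonneg A)

lemma nucNorm_nonneg (A : Matrix (Fin p) (Fin q) ℝ) : 0 ≤ nucNorm A :=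
  sum_nonneg fun j _ => svals_nonneg A j

lemma euclNorm_mulVec_le (A : Matrix (Fin p) (Fin q) ℝ) (x : Fin q → ℝ) :
    euclNorm (A *ᵥ x) ≤ opNorm A * euclNorm x := by
  refine euclNorm_le_of_dotProduct_self_le (mul_nonneg (opNorm_nonneg A) (euclNorm_nonneg x)) ?_
  rw [mulVec_eq_sum_lsv, dotProduct_self_sum_smul_lsv, mul_pow, euclNorm_sq,
    ← sum_sq_rsv_dotProduct A x, mul_sum]
  refine sum_le_sum fun j _ => ?_
  rw [mul_comm (opNorm A ^ 2)]
  gcongr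
  · exact svals_nonneg A j
  · exact svals_le_opNorm A j

lemma opNorm_le_of_euclNorm_mulVec_le (A : Matrix (Fin p) (Fin q) ℝ) {c : ℝ} (hc : 0 ≤ c)
    (h : ∀ x, euclNorm (A *ᵥ x) ≤ c * euclNorm x) : opNorm A ≤ c :=
  Real.iSup_le (fun j => by
    have hj := h (rsv A j)
    rwa [euclNorm_rsv, mul_one, show A *ᵥ rsv A j = lsv A j from rfl, euclNorm_lsv] at hj) hc

lemma euclNorm_mulVec_le_of_opNorm_le_one {W : Matrix (Fin p) (Fin q) ℝ} (hW : opNorm W ≤ 1)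
    (x : Fin q → ℝ) : euclNorm (W *ᵥ x) ≤ euclNorm x :=
  (euclNorm_mulVec_le W x).trans (mul_le_of_le_one_left (euclNorm_nonneg x) hW)

lemma opNorm_sub_le (A B : Matrix (Fin p) (Fin q) ℝ) : opNorm (A - B) ≤ opNorm A + opNorm B :=
  opNorm_le_of_euclNorm_mulVec_le _ (add_nonneg (opNorm_nonneg A) (opNorm_nonneg B)) fun x => by
    rw [sub_mulVec, add_mul]
    exact (euclNorm_sub_le _ _).trans (add_le_add (euclNorm_mulVec_le A x) (euclNorm_mulVec_le B x))

lemma opNorm_transpose_le (A : Matrix (Fin p) (Fin q) ℝ) : opNorm Aᵀ ≤ opNorm A := by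
  refine opNorm_le_of_euclNorm_mulVec_le _ (opNorm_nonneg A) fun x => ?_
  set y := Aᵀ *ᵥ x with hy
  have h : euclNorm y * euclNorm y ≤ (opNorm A * euclNorm x) * euclNorm y :=
    calc euclNorm y * euclNorm y = x ⬝ᵥ (A *ᵥ y) := by
          rw [← sq, euclNorm_sq, hy, mulVec_transpose, dotProduct_mulVec]
      _ ≤ euclNorm x * euclNorm (A *ᵥ y) := (le_abs_self _).trans (abs_dotProduct_le _ _)
      _ ≤ euclNorm x * (opNorm A * euclNorm y) :=
          mul_le_mul_of_nonneg_left (euclNorm_mulVec_le A y) (euclNorm_nonneg x)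
      _ = (opNorm A * euclNorm x) * euclNorm y := by ring
  rcases (euclNorm_nonneg y).eq_or_lt with h0 | hpos
  · rw [← h0]
    exact mul_nonneg (opNorm_nonneg A) (euclNorm_nonneg x)
  · exact le_of_mul_le_mul_right h hpos

lemma frobInner_eq_sum_lsv (A B : Matrix (Fin p) (Fin q) ℝ) :
    frobInner A B = ∑ j, lsv B j ⬝ᵥ (A *ᵥ rsv B j) := by
  conv_lhs => rw [eq_sum_vecMulVec_lsv_rsv B]
  simp only [frobInner_sum_right, frobInner_vecMulVec_right]

lemma abs_frobInner_le (A B : Matrix (Fin p) (Fin q) ℝ) :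
    |frobInner A B| ≤ opNorm A * nucNorm B := by
  rw [frobInner_eq_sum_lsv, nucNorm, mul_sum]
  refine (abs_sum_le_sum_abs _ _).trans (sum_le_sum fun j _ => ?_)
  calc |lsv B j ⬝ᵥ (A *ᵥ rsv B j)| ≤ euclNorm (lsv B j) * euclNorm (A *ᵥ rsv B j) :=
        abs_dotProduct_le _ _
    _ ≤ euclNorm (lsv B j) * (opNorm A * euclNorm (rsv B j)) :=
        mul_le_mul_of_nonneg_left (euclNorm_mulVec_le _ _) (euclNorm_nonneg _)
    _ = opNorm A * svals B j := by rw [euclNorm_lsv, euclNorm_rsv]; ring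

lemma abs_frobInner_le_nucNorm {W : Matrix (Fin p) (Fin q) ℝ} (hW : opNorm W ≤ 1)
    (A : Matrix (Fin p) (Fin q) ℝ) : |frobInner W A| ≤ nucNorm A :=
  (abs_frobInner_le W A).trans (mul_le_of_le_one_left (nucNorm_nonneg A) hW)

/-- The polar factor `U Vᵀ` of `B`, the dual certificate of its nuclear norm; since `0⁻¹ = 0`,
the zero singular values drop out. -/
noncomputable def polarFactor (B : Matrix (Fin p) (Fin q) ℝ) : Matrix (Fin p) (Fin q) ℝ :=
  ∑ j, (svals B j)⁻¹ • vecMulVec (lsv B j) (rsv B j)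

lemma polarFactor_mulVec (B : Matrix (Fin p) (Fin q) ℝ) (x : Fin q → ℝ) :
    polarFactor B *ᵥ x = ∑ j, ((svals B j)⁻¹ * (rsv B j ⬝ᵥ x)) • lsv B j := by
  simp only [polarFactor, sum_mulVec, smul_mulVec, vecMulVec_mulVec, op_smul_eq_smul, smul_smul]

lemma polarFactor_mulVec_rsv (B : Matrix (Fin p) (Fin q) ℝ) (j : Fin q) :
    polarFactor B *ᵥ rsv B j = (svals B j)⁻¹ • lsv B j := by
  rw [polarFactor_mulVec, sum_eq_single j (fun i _ hij => by simp [rsv_dotProduct, hij])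
    (by simp), rsv_dotProduct, if_pos rfl, mul_one]

lemma opNorm_polarFactor_le (B : Matrix (Fin p) (Fin q) ℝ) : opNorm (polarFactor B) ≤ 1 := by
  refine opNorm_le_of_euclNorm_mulVec_le _ zero_le_one fun x => ?_
  rw [one_mul, polarFactor_mulVec]
  refine euclNorm_le_of_dotProduct_self_le (euclNorm_nonneg x) ?_
  rw [dotProduct_self_sum_smul_lsv, euclNorm_sq, ← sum_sq_rsv_dotProduct B x]
  refine sum_le_sum fun j _ => ?_
  rcases eq_or_ne (svals B j) 0 with h | h
  · simp [h, sq_nonneg]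
  · rw [mul_pow, mul_right_comm, ← mul_pow, inv_mul_cancel₀ h, one_pow, one_mul]

lemma frobInner_polarFactor_self (B : Matrix (Fin p) (Fin q) ℝ) :
    frobInner (polarFactor B) B = nucNorm B := by
  rw [frobInner_eq_sum_lsv, nucNorm]
  refine sum_congr rfl fun j _ => ?_
  rw [polarFactor_mulVec_rsv, dotProduct_smul, lsv_dotProduct, if_pos rfl, smul_eq_mul, sq,
    ← mul_assoc, inv_mul_mul_self]

lemma polarFactor_mulVec_eq_zero {B : Matrix (Fin p) (Fin q) ℝ} {x : Fin q → ℝ}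
    (hx : B *ᵥ x = 0) : polarFactor B *ᵥ x = 0 := by
  rw [polarFactor_mulVec]
  refine sum_eq_zero fun j _ => ?_
  have h : svals B j ^ 2 * (rsv B j ⬝ᵥ x) = 0 := by
    rw [← smul_eq_mul, ← smul_dotProduct, ← transpose_mul_self_mulVec_rsv, ← mulVec_mulVec,
      mulVec_transpose, ← dotProduct_mulVec, hx, dotProduct_zero]
  rcases mul_eq_zero.mp h with h | h
  · simp [pow_eq_zero_iff two_ne_zero |>.mp h]
  · simp [h]

lemma dotProduct_polarFactor_mulVec_eq_zero {B : Matrix (Fin p) (Fin q) ℝ} {u : Fin p → ℝ}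
    (hu : ∀ y, u ⬝ᵥ (B *ᵥ y) = 0) (x : Fin q → ℝ) : u ⬝ᵥ (polarFactor B *ᵥ x) = 0 := by
  rw [polarFactor_mulVec, dotProduct_sum]
  exact sum_eq_zero fun j _ => by rw [dotProduct_smul, lsv, hu, smul_zero]

lemma nucNorm_add_le (A B : Matrix (Fin p) (Fin q) ℝ) :
    nucNorm (A + B) ≤ nucNorm A + nucNorm B := by
  have hW := opNorm_polarFactor_le (A + B)
  rw [← frobInner_polarFactor_self, frobInner_add_right]
  exact add_le_add ((le_abs_self _).trans (abs_frobInner_le_nucNorm hW A))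
    ((le_abs_self _).trans (abs_frobInner_le_nucNorm hW B))

lemma nucNorm_smul_le (c : ℝ) (A : Matrix (Fin p) (Fin q) ℝ) :
    nucNorm (c • A) ≤ |c| * nucNorm A := by
  rw [← frobInner_polarFactor_self, frobInner_smul_right]
  exact (le_abs_self _).trans <| by
    rw [abs_mul]
    exact mul_le_mul_of_nonneg_left (abs_frobInner_le_nucNorm (opNorm_polarFactor_le _) A)
      (abs_nonneg c)

lemma nucNorm_sum_vecMulVec_le {ι : Type*} (s : Finset ι) (x : ι → Fin p → ℝ)
    (y : ι → Fin q → ℝ) :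
    nucNorm (∑ i ∈ s, vecMulVec (x i) (y i)) ≤ ∑ i ∈ s, euclNorm (x i) * euclNorm (y i) := by
  have hW := opNorm_polarFactor_le (∑ i ∈ s, vecMulVec (x i) (y i))
  rw [← frobInner_polarFactor_self, frobInner_sum_right]
  refine sum_le_sum fun i _ => ?_
  rw [frobInner_vecMulVec_right]
  exact (le_abs_self _).trans <| (abs_dotProduct_le _ _).trans <|
    mul_le_mul_of_nonneg_left (euclNorm_mulVec_le_of_opNorm_le_one hW _) (euclNorm_nonneg _)

end Norms

section Projection

variable {k : ℕ} {ι : Type*}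

noncomputable def projMatrix (s : Finset ι) (a : ι → Fin k → ℝ) : Matrix (Fin k) (Fin k) ℝ :=
  ∑ i ∈ s, vecMulVec (a i) (a i)

lemma projMatrix_mulVec (s : Finset ι) (a : ι → Fin k → ℝ) (y : Fin k → ℝ) :
    projMatrix s a *ᵥ y = ∑ i ∈ s, (a i ⬝ᵥ y) • a i := by
  simp only [projMatrix, sum_mulVec, vecMulVec_mulVec, op_smul_eq_smul]

variable [DecidableEq ι]

def OrthonormalOn (s : Finset ι) (a : ι → Fin k → ℝ) : Prop :=
  ∀ i ∈ s, ∀ j ∈ s, a i ⬝ᵥ a j = if i = j then 1 else 0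

variable {s : Finset ι} {a : ι → Fin k → ℝ}

lemma OrthonormalOn.euclNorm_eq_one (ha : OrthonormalOn s a) {i : ι} (hi : i ∈ s) :
    euclNorm (a i) = 1 :=
  euclNorm_eq_of_dotProduct_self_eq zero_le_one (by rw [ha i hi i hi, if_pos rfl, one_pow])

lemma OrthonormalOn.dotProduct_self_sum_smul (ha : OrthonormalOn s a) (c : ι → ℝ) :
    (∑ i ∈ s, c i • a i) ⬝ᵥ (∑ i ∈ s, c i • a i) = ∑ i ∈ s, c i ^ 2 := by
  rw [_root_.dotProduct_self_sum_smul fun i hi j hj hij => by rw [ha i hi j hj, if_neg hij]]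
  exact sum_congr rfl fun i hi => by rw [ha i hi i hi, if_pos rfl, mul_one]

lemma sum_vecMulVec_mulVec_of_mem {l : ℕ} (c : ι → Fin l → ℝ) (ha : OrthonormalOn s a) {j : ι}
    (hj : j ∈ s) : (∑ i ∈ s, vecMulVec (c i) (a i)) *ᵥ a j = c j := by
  simp only [sum_mulVec, vecMulVec_mulVec, op_smul_eq_smul]
  rw [sum_eq_single_of_mem j hj fun i hi hij => by rw [ha i hi j hj, if_neg hij, zero_smul],
    ha j hj j hj, if_pos rfl, one_smul]

lemma projMatrix_mulVec_of_mem (ha : OrthonormalOn s a) {j : ι} (hj : j ∈ s) :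
    projMatrix s a *ᵥ a j = a j :=
  sum_vecMulVec_mulVec_of_mem a ha hj

lemma sub_projMatrix_mulVec_of_mem (ha : OrthonormalOn s a) {j : ι} (hj : j ∈ s) :
    (1 - projMatrix s a) *ᵥ a j = 0 := by
  rw [sub_mulVec, one_mulVec, projMatrix_mulVec_of_mem ha hj, sub_self]

lemma sub_projMatrix_mulVec_projMatrix_mulVec (ha : OrthonormalOn s a) (y : Fin k → ℝ) :
    (1 - projMatrix s a) *ᵥ (projMatrix s a *ᵥ y) = 0 := by
  rw [projMatrix_mulVec, mulVec_sum]
  exact sum_eq_zero fun i hi => by rw [mulVec_smul, sub_projMatrix_mulVec_of_mem ha hi, smul_zero]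

lemma dotProduct_sub_projMatrix_mulVec (ha : OrthonormalOn s a) {j : ι} (hj : j ∈ s)
    (y : Fin k → ℝ) : a j ⬝ᵥ ((1 - projMatrix s a) *ᵥ y) = 0 := by
  rw [sub_mulVec, one_mulVec, projMatrix_mulVec, dotProduct_sub, dotProduct_sum,
    sum_eq_single_of_mem j hj fun i hi hij => by
      rw [dotProduct_smul, ha j hj i hi, if_neg (Ne.symm hij), smul_zero],
    dotProduct_smul, ha j hj j hj, if_pos rfl, smul_eq_mul, mul_one, sub_self]

lemma dotProduct_self_projMatrix_mulVec (ha : OrthonormalOn s a) (y : Fin k → ℝ) :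
    (projMatrix s a *ᵥ y) ⬝ᵥ (projMatrix s a *ᵥ y) = ∑ i ∈ s, (a i ⬝ᵥ y) ^ 2 := by
  rw [projMatrix_mulVec, ha.dotProduct_self_sum_smul]

lemma dotProduct_self_projMatrix_add_sub (ha : OrthonormalOn s a) (y : Fin k → ℝ) :
    (projMatrix s a *ᵥ y) ⬝ᵥ (projMatrix s a *ᵥ y)
      + ((1 - projMatrix s a) *ᵥ y) ⬝ᵥ ((1 - projMatrix s a) *ᵥ y) = y ⬝ᵥ y := by
  have hy : y ⬝ᵥ (projMatrix s a *ᵥ y) = ∑ i ∈ s, (a i ⬝ᵥ y) ^ 2 := by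
    rw [projMatrix_mulVec, dotProduct_sum]
    exact sum_congr rfl fun i _ => by rw [dotProduct_smul, smul_eq_mul, dotProduct_comm, sq]
  rw [sub_mulVec, one_mulVec, sub_dotProduct, dotProduct_sub, dotProduct_sub,
    dotProduct_comm (projMatrix s a *ᵥ y) y, hy, dotProduct_self_projMatrix_mulVec ha]
  ring

lemma euclNorm_sub_projMatrix_mulVec_le (ha : OrthonormalOn s a) (y : Fin k → ℝ) :
    euclNorm ((1 - projMatrix s a) *ᵥ y) ≤ euclNorm y := by
  refine euclNorm_le_of_dotProduct_self_le (euclNorm_nonneg y) ?_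
  rw [euclNorm_sq, ← dotProduct_self_projMatrix_add_sub ha y]
  exact le_add_of_nonneg_left (dotProduct_self_star_nonneg _)

lemma opNorm_sub_projMatrix_mul_le (ha : OrthonormalOn s a) {l : ℕ}
    (M : Matrix (Fin k) (Fin l) ℝ) : opNorm ((1 - projMatrix s a) * M) ≤ opNorm M :=
  opNorm_le_of_euclNorm_mulVec_le _ (opNorm_nonneg M) fun x => by
    rw [← mulVec_mulVec]
    exact (euclNorm_sub_projMatrix_mulVec_le ha _).trans (euclNorm_mulVec_le M x)

lemma nucNorm_projMatrix_mul_le (ha : OrthonormalOn s a) {l : ℕ} (M : Matrix (Fin k) (Fin l) ℝ) :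
    nucNorm (projMatrix s a * M) ≤ s.card * opNorm M := by
  simp only [projMatrix, Matrix.sum_mul, vecMulVec_mul]
  refine (nucNorm_sum_vecMulVec_le s _ _).trans ?_
  rw [← nsmul_eq_mul]
  refine sum_le_card_nsmul _ _ _ fun i hi => ?_
  rw [ha.euclNorm_eq_one hi, one_mul, ← mulVec_transpose]
  calc euclNorm (Mᵀ *ᵥ a i) ≤ opNorm Mᵀ * euclNorm (a i) := euclNorm_mulVec_le _ _
    _ ≤ opNorm M := by rw [ha.euclNorm_eq_one hi, mul_one]; exact opNorm_transpose_le M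

lemma nucNorm_mul_projMatrix_le (ha : OrthonormalOn s a) {l : ℕ} (M : Matrix (Fin l) (Fin k) ℝ) :
    nucNorm (M * projMatrix s a) ≤ s.card * opNorm M := by
  simp only [projMatrix, Matrix.mul_sum, mul_vecMulVec]
  refine (nucNorm_sum_vecMulVec_le s _ _).trans ?_
  rw [← nsmul_eq_mul]
  refine sum_le_card_nsmul _ _ _ fun i hi => ?_
  calc euclNorm (M *ᵥ a i) * euclNorm (a i) ≤ opNorm M * euclNorm (a i) * euclNorm (a i) :=
        mul_le_mul_of_nonneg_right (euclNorm_mulVec_le _ _) (euclNorm_nonneg _)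
    _ = opNorm M := by rw [ha.euclNorm_eq_one hi, mul_one, mul_one]

end Projection

section Compress

variable {p q : ℕ} {ι : Type*} [DecidableEq ι] {s : Finset ι} {a : ι → Fin p → ℝ}
  {b : ι → Fin q → ℝ}

noncomputable def compress (s : Finset ι) (a : ι → Fin p → ℝ) (b : ι → Fin q → ℝ)
    (D : Matrix (Fin p) (Fin q) ℝ) : Matrix (Fin p) (Fin q) ℝ :=
  (1 - projMatrix s a) * D * (1 - projMatrix s b)

lemma compress_mulVec_projMatrix_mulVec (hb : OrthonormalOn s b) (D : Matrix (Fin p) (Fin q) ℝ)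
    (y : Fin q → ℝ) : compress s a b D *ᵥ (projMatrix s b *ᵥ y) = 0 := by
  rw [compress, ← mulVec_mulVec, sub_projMatrix_mulVec_projMatrix_mulVec hb, mulVec_zero]

lemma compress_mulVec_of_mem (hb : OrthonormalOn s b) (D : Matrix (Fin p) (Fin q) ℝ) {j : ι}
    (hj : j ∈ s) : compress s a b D *ᵥ b j = 0 := by
  rw [compress, ← mulVec_mulVec, sub_projMatrix_mulVec_of_mem hb hj, mulVec_zero]

lemma dotProduct_compress_mulVec (ha : OrthonormalOn s a) (D : Matrix (Fin p) (Fin q) ℝ) {j : ι}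
    (hj : j ∈ s) (y : Fin q → ℝ) : a j ⬝ᵥ (compress s a b D *ᵥ y) = 0 := by
  rw [compress, Matrix.mul_assoc, ← mulVec_mulVec, dotProduct_sub_projMatrix_mulVec ha hj]

lemma nucNorm_sub_compress_le (ha : OrthonormalOn s a) (hb : OrthonormalOn s b)
    (Δ : Matrix (Fin p) (Fin q) ℝ) :
    nucNorm (Δ - compress s a b Δ) ≤ 2 * s.card * opNorm Δ := by
  set P := projMatrix s a
  set Q := projMatrix s b
  have h : Δ - compress s a b Δ = P * Δ + (1 - P) * Δ * Q := by
    simp only [compress, Matrix.sub_mul, Matrix.mul_sub, Matrix.one_mul, Matrix.mul_one]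
    abel
  calc nucNorm (Δ - compress s a b Δ) ≤ nucNorm (P * Δ) + nucNorm ((1 - P) * Δ * Q) :=
        h ▸ nucNorm_add_le _ _
    _ ≤ s.card * opNorm Δ + s.card * opNorm ((1 - P) * Δ) :=
        add_le_add (nucNorm_projMatrix_mul_le ha Δ) (nucNorm_mul_projMatrix_le hb _)
    _ ≤ s.card * opNorm Δ + s.card * opNorm Δ := by
        gcongr
        exact opNorm_sub_projMatrix_mul_le ha Δ
    _ = 2 * s.card * opNorm Δ := by ring

end Compress

section Decomposition

variable {p q : ℕ}

lemma orthonormalOn_rsv (A : Matrix (Fin p) (Fin q) ℝ) (s : Finset (Fin q)) :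
    OrthonormalOn s (rsv A) :=
  fun i _ j _ => rsv_dotProduct A i j

/-- The unit left singular vectors `uⱼ` where `σⱼ ≠ 0` (and `0` where `σⱼ = 0`). -/
noncomputable def lsvUnit (A : Matrix (Fin p) (Fin q) ℝ) (j : Fin q) : Fin p → ℝ :=
  (svals A j)⁻¹ • lsv A j

lemma orthonormalOn_lsvUnit {A : Matrix (Fin p) (Fin q) ℝ} {s : Finset (Fin q)}
    (hs : ∀ j ∈ s, svals A j ≠ 0) : OrthonormalOn s (lsvUnit A) := by
  intro i hi j _
  rw [lsvUnit, lsvUnit, smul_dotProduct, dotProduct_smul, lsv_dotProduct, smul_eq_mul, smul_eq_mul]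
  split_ifs with h
  · subst h
    field_simp [hs i hi]
  · simp

lemma lsv_dotProduct_lsvUnit (A : Matrix (Fin p) (Fin q) ℝ) (j : Fin q) :
    lsv A j ⬝ᵥ lsvUnit A j = svals A j := by
  rw [lsvUnit, dotProduct_smul, lsv_dotProduct, if_pos rfl, smul_eq_mul, sq, ← mul_assoc,
    inv_mul_mul_self]

lemma nucNorm_vecMulVec_lsvUnit_le (A : Matrix (Fin p) (Fin q) ℝ) (j : Fin q) :
    nucNorm (vecMulVec (lsvUnit A j) (rsv A j)) ≤ 1 := by
  have h := nucNorm_sum_vecMulVec_le {j} (lsvUnit A) (rsv A)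
  rw [sum_singleton, sum_singleton, euclNorm_rsv, mul_one, lsvUnit, euclNorm_smul, euclNorm_lsv,
    abs_inv, abs_of_nonneg (svals_nonneg A j)] at h
  exact h.trans (inv_mul_le_one_of_le₀ le_rfl (svals_nonneg A j))

variable {ι : Type*} [DecidableEq ι] {s : Finset ι} {a : ι → Fin p → ℝ} {b : ι → Fin q → ℝ}

/-- The certificate `U_S V_Sᵀ + polarFactor Δ₂` has operator norm at most one because its two
summands act on orthogonal subspaces, on both sides. -/
lemma opNorm_sum_vecMulVec_add_polarFactor_compress_le (ha : OrthonormalOn s a)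
    (hb : OrthonormalOn s b) (D : Matrix (Fin p) (Fin q) ℝ) :
    opNorm (∑ i ∈ s, vecMulVec (a i) (b i) + polarFactor (compress s a b D)) ≤ 1 := by
  set Q := projMatrix s b
  refine opNorm_le_of_euclNorm_mulVec_le _ zero_le_one fun x => ?_
  simp only [one_mul, add_mulVec, sum_mulVec, vecMulVec_mulVec, op_smul_eq_smul]
  set u := ∑ i ∈ s, (b i ⬝ᵥ x) • a i
  set w := polarFactor (compress s a b D) *ᵥ x
  have hu : u ⬝ᵥ u = (Q *ᵥ x) ⬝ᵥ (Q *ᵥ x) := by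
    rw [ha.dotProduct_self_sum_smul, dotProduct_self_projMatrix_mulVec hb]
  have huw : u ⬝ᵥ w = 0 := by
    rw [sum_dotProduct]
    exact sum_eq_zero fun i hi => by
      rw [smul_dotProduct, dotProduct_polarFactor_mulVec_eq_zero
        (dotProduct_compress_mulVec ha D hi) x, smul_zero]
  have hww : w ⬝ᵥ w ≤ ((1 - Q) *ᵥ x) ⬝ᵥ ((1 - Q) *ᵥ x) := by
    have hwQ : w = polarFactor (compress s a b D) *ᵥ ((1 - Q) *ᵥ x) := by
      rw [sub_mulVec, one_mulVec, mulVec_sub,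
        polarFactor_mulVec_eq_zero (compress_mulVec_projMatrix_mulVec hb D x), sub_zero]
    rw [hwQ, ← euclNorm_sq, ← euclNorm_sq]
    exact pow_le_pow_left₀ (euclNorm_nonneg _)
      (euclNorm_mulVec_le_of_opNorm_le_one (opNorm_polarFactor_le _) _) 2
  refine euclNorm_le_of_dotProduct_self_le (euclNorm_nonneg x) ?_
  rw [euclNorm_sq, ← dotProduct_self_projMatrix_add_sub hb x, add_dotProduct, dotProduct_add,
    dotProduct_add, huw, dotProduct_comm w u, huw, hu]
  linarith

/-- Decomposability of the nuclear norm, by pairing with the certificate above. -/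
lemma nucNorm_add_compress_ge (Θ : Matrix (Fin p) (Fin q) ℝ) {S : Finset (Fin q)}
    (hS : ∀ j ∈ S, svals Θ j ≠ 0) (Δ₁ D : Matrix (Fin p) (Fin q) ℝ) :
    nucNorm Θ - 2 * ∑ j ∈ Sᶜ, svals Θ j + nucNorm (compress S (lsvUnit Θ) (rsv Θ) D)
        - nucNorm Δ₁ ≤ nucNorm (Θ + (Δ₁ + compress S (lsvUnit Θ) (rsv Θ) D)) := by
  have ha := orthonormalOn_lsvUnit hS
  have hb := orthonormalOn_rsv Θ S
  set Δ₂ := compress S (lsvUnit Θ) (rsv Θ) D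
  set W := ∑ j ∈ S, vecMulVec (lsvUnit Θ j) (rsv Θ j) + polarFactor Δ₂
  have hW : opNorm W ≤ 1 := opNorm_sum_vecMulVec_add_polarFactor_compress_le ha hb D
  have hΘ : Θ = ∑ j ∈ S, vecMulVec (lsv Θ j) (rsv Θ j)
      + ∑ j ∈ Sᶜ, vecMulVec (lsv Θ j) (rsv Θ j) := by
    rw [sum_add_sum_compl]
    exact eq_sum_vecMulVec_lsv_rsv Θ
  set ΘS := ∑ j ∈ S, vecMulVec (lsv Θ j) (rsv Θ j)
  set ΘSc := ∑ j ∈ Sᶜ, vecMulVec (lsv Θ j) (rsv Θ j)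
  have hWS : frobInner W ΘS = ∑ j ∈ S, svals Θ j := by
    rw [frobInner_sum_right]
    refine sum_congr rfl fun j hj => ?_
    rw [frobInner_vecMulVec_right, add_mulVec, sum_vecMulVec_mulVec_of_mem _ hb hj,
      polarFactor_mulVec_eq_zero (compress_mulVec_of_mem hb D hj), add_zero,
      lsv_dotProduct_lsvUnit]
  have hWSc : -∑ j ∈ Sᶜ, svals Θ j ≤ frobInner W ΘSc := by
    refine neg_le_of_abs_le ((abs_frobInner_le_nucNorm hW _).trans ?_)
    refine (nucNorm_sum_vecMulVec_le _ _ _).trans_eq (sum_congr rfl fun j _ => ?_)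
    rw [euclNorm_lsv, euclNorm_rsv, mul_one]
  have hW₁ : -nucNorm Δ₁ ≤ frobInner W Δ₁ := neg_le_of_abs_le (abs_frobInner_le_nucNorm hW Δ₁)
  have hW₂ : frobInner W Δ₂ = nucNorm Δ₂ := by
    rw [frobInner_add_left, frobInner_polarFactor_self, frobInner_comm, frobInner_sum_right]
    refine (add_eq_right).mpr (sum_eq_zero fun j hj => ?_)
    rw [frobInner_vecMulVec_right, compress_mulVec_of_mem hb D hj, dotProduct_zero]
  have hnuc : nucNorm Θ = ∑ j ∈ S, svals Θ j + ∑ j ∈ Sᶜ, svals Θ j :=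
    (sum_add_sum_compl S _).symm
  have hle := le_of_abs_le (abs_frobInner_le_nucNorm hW (Θ + (Δ₁ + Δ₂)))
  rw [frobInner_add_right, frobInner_add_right] at hle
  have hWΘ : frobInner W Θ = frobInner W ΘS + frobInner W ΘSc := by
    rw [← frobInner_add_right, ← hΘ]
  linarith

theorem exists_nucNorm_decomposition (Θ Δ : Matrix (Fin p) (Fin q) ℝ) {S : Finset (Fin q)}
    (hS : ∀ j ∈ S, svals Θ j ≠ 0) :
    ∃ Δ₁ Δ₂ : Matrix (Fin p) (Fin q) ℝ, Δ = Δ₁ + Δ₂ ∧ nucNorm Δ₁ ≤ 2 * S.card * opNorm Δ ∧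
      nucNorm Θ - 2 * ∑ j ∈ Sᶜ, svals Θ j + nucNorm Δ₂ - nucNorm Δ₁ ≤ nucNorm (Θ + Δ) := by
  have h := nucNorm_add_compress_ge Θ hS (Δ - compress S (lsvUnit Θ) (rsv Θ) Δ) Δ
  rw [sub_add_cancel] at h
  exact ⟨_, _, (sub_add_cancel Δ _).symm,
    nucNorm_sub_compress_le (orthonormalOn_lsvUnit hS) (orthonormalOn_rsv Θ S) Δ, h⟩

end Decomposition

section LeastSquares

variable {N n d : ℕ} (X : Matrix (Fin N) (Fin n) ℝ) (Z : Matrix (Fin N) (Fin d) ℝ)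

lemma lossFn_add (Θ Δ : Matrix (Fin d) (Fin n) ℝ) :
    lossFn X Z (Θ + Δ) = lossFn X Z Θ + frobInner (gradFn X Z Θ) Δ
      + 1 / (2 * N) * frobInner (Z * Δ) (Z * Δ) := by
  have hR : X - Z * (Θ + Δ) = (X - Z * Θ) - Z * Δ := by rw [Matrix.mul_add]; abel
  have hG : gradFn X Z Θ = -((1 / (N : ℝ)) • (Zᵀ * (X - Z * Θ))) := by
    rw [gradFn, ← smul_neg, ← Matrix.mul_neg, neg_sub]
  rw [lossFn, lossFn, hR, hG]
  generalize X - Z * Θ = R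
  rw [frobNorm_sq, frobNorm_sq, frobInner_neg_left, frobInner_smul_left,
    frobInner_transpose_mul_left, frobInner_sub_left, frobInner_sub_right, frobInner_sub_right,
    frobInner_comm (Z * Δ) R]
  ring

variable {lam : ℝ} {Θhat : Matrix (Fin d) (Fin n) ℝ}

/-- First-order optimality: `Θ̂ - tE` competes with `Θ̂` for every `t > 0`. -/
lemma frobInner_gradFn_le_of_isMin (hlam : 0 ≤ lam)
    (hmin : ∀ Θ, lossFn X Z Θhat + lam * nucNorm Θhat ≤ lossFn X Z Θ + lam * nucNorm Θ)
    {E : Matrix (Fin d) (Fin n) ℝ} (hE : nucNorm E ≤ 1) : frobInner (gradFn X Z Θhat) E ≤ lam := by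
  have hC : 0 ≤ 1 / (2 * N) * frobInner (Z * E) (Z * E) :=
    mul_nonneg (by positivity) (frobInner_self_nonneg _)
  have key : ∀ t : ℝ, 0 < t → frobInner (gradFn X Z Θhat) E
      ≤ lam + t * (1 / (2 * N) * frobInner (Z * E) (Z * E)) := by
    intro t ht
    have h := hmin (Θhat + (-t) • E)
    have hnuc : nucNorm (Θhat + (-t) • E) ≤ nucNorm Θhat + t := by
      refine (nucNorm_add_le _ _).trans (add_le_add le_rfl ((nucNorm_smul_le _ _).trans ?_))
      rw [abs_neg, abs_of_pos ht]
      exact mul_le_of_le_one_right ht.le hE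
    rw [lossFn_add, Matrix.mul_smul, frobInner_smul_right, frobInner_smul_left,
      frobInner_smul_right] at h
    have h' := mul_le_mul_of_nonneg_left hnuc hlam
    refine le_of_mul_le_mul_left ?_ ht
    linarith
  generalize 1 / (2 * N) * frobInner (Z * E) (Z * E) = C at key hC
  refine le_of_forall_pos_le_add fun ε hε => (key (ε / (C + 1)) (by positivity)).trans ?_
  have hεC : ε / (C + 1) * C ≤ ε := by
    rw [div_mul_eq_mul_div, div_le_iff₀ (by positivity)]
    nlinarith
  linarith

lemma opNorm_gradFn_le_of_isMin (hlam : 0 ≤ lam)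
    (hmin : ∀ Θ, lossFn X Z Θhat + lam * nucNorm Θhat ≤ lossFn X Z Θ + lam * nucNorm Θ) :
    opNorm (gradFn X Z Θhat) ≤ lam := by
  refine Real.iSup_le (fun j => ?_) hlam
  have h := frobInner_gradFn_le_of_isMin X Z hlam hmin
    (nucNorm_vecMulVec_lsvUnit_le (gradFn X Z Θhat) j)
  rwa [frobInner_vecMulVec_right, dotProduct_comm, ← lsv, lsv_dotProduct_lsvUnit] at h

/-- The basic inequality: compare `Θ̂` with `Θ*`. -/
lemma nucNorm_sub_nucNorm_le_of_isMin {Θstar : Matrix (Fin d) (Fin n) ℝ} (hlam0 : 0 < lam)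
    (hlam : 2 * opNorm (gradFn X Z Θstar) ≤ lam)
    (hmin : ∀ Θ, lossFn X Z Θhat + lam * nucNorm Θhat ≤ lossFn X Z Θ + lam * nucNorm Θ) :
    nucNorm Θhat - nucNorm Θstar ≤ nucNorm (Θhat - Θstar) / 2 := by
  have hL := lossFn_add X Z Θstar (Θhat - Θstar)
  rw [add_sub_cancel] at hL
  have hC : 0 ≤ 1 / (2 * N) * frobInner (Z * (Θhat - Θstar)) (Z * (Θhat - Θstar)) :=
    mul_nonneg (by positivity) (frobInner_self_nonneg _)
  have hG := neg_le_of_abs_le (abs_frobInner_le (gradFn X Z Θstar) (Θhat - Θstar))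
  have hGlam := mul_le_mul_of_nonneg_right hlam (nucNorm_nonneg (Θhat - Θstar))
  refine le_of_mul_le_mul_left ?_ hlam0
  linarith [hmin Θstar]

end LeastSquares

section WeakSparsity

lemma ite_rpow_nonneg {x : ℝ} (hx : 0 ≤ x) (q : ℝ) : 0 ≤ if x = 0 then 0 else x ^ q := by
  split_ifs
  exacts [le_rfl, Real.rpow_nonneg hx q]

variable {ι : Type*} [Fintype ι] {σ : ι → ℝ} {q R t : ℝ}

lemma card_mul_rpow_le (hσ : ∀ j, 0 ≤ σ j) (hq : 0 ≤ q) (ht : 0 ≤ t)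
    (hR : ∑ j, (if σ j = 0 then 0 else σ j ^ q) ≤ R) :
    #{j | t < σ j} * t ^ q ≤ R := by
  calc #{j | t < σ j} * t ^ q = ∑ j ∈ {j | t < σ j}, t ^ q := by rw [sum_const, nsmul_eq_mul]
    _ ≤ ∑ j ∈ {j | t < σ j}, (if σ j = 0 then 0 else σ j ^ q) := by
        refine sum_le_sum fun j hj => ?_
        have hj := (mem_filter.mp hj).2
        rw [if_neg (ht.trans_lt hj).ne']
        exact Real.rpow_le_rpow ht hj.le hq
    _ ≤ R := (sum_le_univ_sum_of_nonneg fun j => ite_rpow_nonneg (hσ j) q).trans hR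

lemma sum_compl_le_mul_rpow [DecidableEq ι] (hσ : ∀ j, 0 ≤ σ j) (hq : q ≤ 1) (ht : 0 < t)
    (hR : ∑ j, (if σ j = 0 then 0 else σ j ^ q) ≤ R) :
    ∑ j ∈ ({j | t < σ j} : Finset ι)ᶜ, σ j ≤ R * t ^ (1 - q) := by
  calc ∑ j ∈ ({j | t < σ j} : Finset ι)ᶜ, σ j
      ≤ ∑ j ∈ ({j | t < σ j} : Finset ι)ᶜ, (if σ j = 0 then 0 else σ j ^ q) * t ^ (1 - q) := by
        refine sum_le_sum fun j hj => ?_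
        have hj : σ j ≤ t := not_lt.mp (by simpa using hj)
        split_ifs with h0
        · rw [h0, zero_mul]
        · have hpos := (hσ j).lt_of_ne (Ne.symm h0)
          calc σ j = σ j ^ q * σ j ^ (1 - q) := by rw [← Real.rpow_add hpos]; norm_num
            _ ≤ σ j ^ q * t ^ (1 - q) := by gcongr
    _ = (∑ j ∈ ({j | t < σ j} : Finset ι)ᶜ, (if σ j = 0 then 0 else σ j ^ q)) * t ^ (1 - q) := by
        rw [sum_mul]
    _ ≤ R * t ^ (1 - q) := by
        gcongr
        exact (sum_le_univ_sum_of_nonneg fun j => ite_rpow_nonneg (hσ j) q).trans hR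

end WeakSparsity

/-- The decomposition is applied with the singular values of `Θ` thresholded at `t = ‖Δ‖_op`. -/
lemma nucNorm_le_of_nucNorm_add_sub_le {m n : ℕ} {Θ Δ : Matrix (Fin m) (Fin n) ℝ} {q R : ℝ}
    (hq0 : 0 ≤ q) (hq1 : q ≤ 1)
    (hball : ∑ j, (if svals Θ j = 0 then 0 else svals Θ j ^ q) ≤ R) (hΔ : 0 < opNorm Δ)
    (hbasic : nucNorm (Θ + Δ) - nucNorm Θ ≤ nucNorm Δ / 2) :
    nucNorm Δ ≤ 12 * R * opNorm Δ ^ (1 - q) := by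
  set t := opNorm Δ with ht
  obtain ⟨Δ₁, Δ₂, hsplit, h₁, h₂⟩ := exists_nucNorm_decomposition Θ Δ
    (S := {j | t < svals Θ j}) fun j hj => (hΔ.trans (mem_filter.mp hj).2).ne'
  rw [← ht] at h₁
  have h₃ : nucNorm Δ ≤ nucNorm Δ₁ + nucNorm Δ₂ := hsplit ▸ nucNorm_add_le Δ₁ Δ₂
  have hcard := card_mul_rpow_le (svals_nonneg Θ) hq0 hΔ.le hball
  have hcompl := sum_compl_le_mul_rpow (svals_nonneg Θ) hq1 hΔ hball
  have hcard' : #{j | t < svals Θ j} * t ≤ R * t ^ (1 - q) := by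
    calc (#{j | t < svals Θ j} : ℝ) * t = #{j | t < svals Θ j} * t ^ q * t ^ (1 - q) := by
          rw [mul_assoc, ← Real.rpow_add hΔ]; norm_num
      _ ≤ R * t ^ (1 - q) := by gcongr
  linarith

lemma le_max_of_le_add_rpow {K τ R lam q t : ℝ} (hK : 0 < K) (hq0 : 0 ≤ q) (hq1 : q ≤ 1)
    (ht : 0 < t) (hRK : 128 * τ * R ≤ K) (h : K * t ≤ 3 / 2 * lam + 12 * τ * R * t ^ (1 - q)) :
    t ≤ max (32 * τ * R / K) (6 * lam / K) := by
  rcases le_or_gt (12 * τ * R * t ^ (1 - q)) (K * t / 2) with hsmall | hlarge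
  · exact le_max_of_le_right (by rw [le_div_iff₀ hK]; linarith [mul_pos ht hK])
  have hKq : K * t ^ q < 24 * τ * R := by
    refine lt_of_mul_lt_mul_right ?_ (Real.rpow_pos_of_pos ht (1 - q)).le
    rw [mul_assoc, ← Real.rpow_add ht, add_sub_cancel, Real.rpow_one]
    linarith
  rcases hq0.eq_or_lt with rfl | hq
  · rw [Real.rpow_zero, mul_one] at hKq
    linarith
  have htq : t ^ q < 24 * τ * R / K := by rw [lt_div_iff₀ hK]; linarith
  -- `t^q < 24 τ R / K ≤ 3 / 16` forces `t < 1`, hence `t ≤ t^q`.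
  have ht1 : t < 1 := by
    by_contra! h1
    have : 24 * τ * R / K ≤ 3 / 16 := by rw [div_le_iff₀ hK]; linarith
    linarith [Real.one_le_rpow h1 hq.le]
  have hτR : 0 < 24 * τ * R / K := (Real.rpow_pos_of_pos ht q).trans htq
  refine le_max_of_le_left ?_
  calc t ≤ t ^ q := by simpa using Real.rpow_le_rpow_of_exponent_ge ht ht1.le hq1
    _ ≤ 24 * τ * R / K := htq.le
    _ ≤ 32 * τ * R / K := by
        rw [div_le_div_iff_of_pos_right hK]
        linarith [(div_pos_iff_of_pos_right hK).mp hτR]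

theorem opNorm_error_bound_weak_lowrank_general {N n m : ℕ}
    (X : Matrix (Fin N) (Fin n) ℝ) (Z : Matrix (Fin N) (Fin (n + m)) ℝ)
    (q Rq : ℝ) (hq0 : 0 ≤ q) (hq1 : q ≤ 1)
    (Θstar : Matrix (Fin (n + m)) (Fin n) ℝ)
    (hball : ∑ j, (if svals Θstar j = 0 then 0 else (svals Θstar j) ^ q) ≤ Rq)
    (K τ lam : ℝ) (hK : 0 < K) (hτ : 0 ≤ τ) (hlam0 : 0 < lam)
    (hcurv : ∀ Δ : Matrix (Fin (n + m)) (Fin n) ℝ,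
      opNorm (gradFn X Z (Θstar + Δ) - gradFn X Z Θstar) ≥ K * opNorm Δ - τ * nucNorm Δ)
    (hRqK : 128 * τ * Rq ≤ K)
    (hlam : lam ≥ 2 * opNorm (gradFn X Z Θstar))
    (Θhat : Matrix (Fin (n + m)) (Fin n) ℝ)
    (hmin : ∀ Θ : Matrix (Fin (n + m)) (Fin n) ℝ,
      lossFn X Z Θhat + lam * nucNorm Θhat ≤ lossFn X Z Θ + lam * nucNorm Θ) :
    opNorm (Θhat - Θstar) ≤ max (32 * τ * Rq / K) (6 * lam / K) := by
  have hΘ : Θstar + (Θhat - Θstar) = Θhat := add_sub_cancel Θstar Θhat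
  rcases (opNorm_nonneg (Θhat - Θstar)).eq_or_lt with h0 | ht
  · rw [← h0]
    exact le_max_of_le_right (div_nonneg (by linarith) hK.le)
  have hgrad : opNorm (gradFn X Z Θhat - gradFn X Z Θstar) ≤ 3 / 2 * lam :=
    (opNorm_sub_le _ _).trans (by linarith [opNorm_gradFn_le_of_isMin X Z hlam0.le hmin])
  have hcone := nucNorm_le_of_nucNorm_add_sub_le hq0 hq1 hball ht
    (by rw [hΘ]; exact nucNorm_sub_nucNorm_le_of_isMin X Z hlam0 hlam hmin)
  refine le_max_of_le_add_rpow hK hq0 hq1 ht hRqK ?_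
  have hcurvΔ := hcurv (Θhat - Θstar)
  rw [hΘ] at hcurvΔ
  linarith [mul_le_mul_of_nonneg_left hcone hτ]

/-- operator-norm error bound for weakly low-rank matrices
(Θ* in the ℓ_q-ball of singular values, with the convention 0^0 = 0). -/
theorem opNorm_error_bound_weak_lowrank {N n m : ℕ} (hN : 0 < N)
    (X : Matrix (Fin N) (Fin n) ℝ) (Z : Matrix (Fin N) (Fin (n + m)) ℝ)
    (q Rq : ℝ) (hq0 : 0 ≤ q) (hq1 : q ≤ 1) (hRq : 0 < Rq)
    (Θstar : Matrix (Fin (n + m)) (Fin n) ℝ)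
    (hball : ∑ j, (if svals Θstar j = 0 then 0 else (svals Θstar j) ^ q) ≤ Rq)
    (K τ lam : ℝ) (hK : 0 < K) (hτ : 0 ≤ τ) (hlam0 : 0 < lam)
    (hcurv : ∀ Δ : Matrix (Fin (n + m)) (Fin n) ℝ,
      opNorm (gradFn X Z (Θstar + Δ) - gradFn X Z Θstar) ≥ K * opNorm Δ - τ * nucNorm Δ)
    (hRqK : 128 * τ * Rq ≤ K)
    (hlam : lam ≥ 2 * opNorm (gradFn X Z Θstar))
    (Θhat : Matrix (Fin (n + m)) (Fin n) ℝ)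
    (hmin : ∀ Θ : Matrix (Fin (n + m)) (Fin n) ℝ,
      lossFn X Z Θhat + lam * nucNorm Θhat ≤ lossFn X Z Θ + lam * nucNorm Θ) :
    opNorm (Θhat - Θstar) ≤ max (32 * τ * Rq / K) (6 * lam / K) :=
  opNorm_error_bound_weak_lowrank_general X Z q Rq hq0 hq1 Θstar hball K τ lam hK hτ hlam0 hcurv
    hRqK hlam Θhat hmin
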